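/- arXiv:1809.08091 — 3 statements merged into one kernel-verified Lean document; each statement's English description precedes it below -/
import Mathlib

section
/- Let Γ be a finite simplicial graph and 𝒢 = (G_v)_{v∈V} a family of nontrivial groups. Assume Γ is not the star of a vertex, i.e. there is no vertex u ∈ V with V = star(u). If an automorphism of Γ𝒢 is simultaneously an inner automorphism (of the form x ↦ g x g⁻¹ for some g ∈ Γ𝒢) and a local automorphism, then it is the identity. -/
open scoped Pointwise

section GraphProductDefs

variable {V : Type} (Γ : SimpleGraph V) (G : V → Type) [∀ v, Group (G v)]

/-- The set of commutation relators defining the graph product of the family `G` over `Γ`. -/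
def graphProductRels : Set (Monoid.CoprodI G) :=
  { x | ∃ (u v : V) (g : G u) (h : G v), Γ.Adj u v ∧
      x = Monoid.CoprodI.of g * Monoid.CoprodI.of h *
        (Monoid.CoprodI.of g)⁻¹ * (Monoid.CoprodI.of h)⁻¹ }

/-- The graph product of the family `G` over the simplicial graph `Γ`. -/
abbrev GraphProduct : Type :=
  Monoid.CoprodI G ⧸ Subgroup.normalClosure (graphProductRels Γ G)

/-- The canonical map from a vertex group to the graph product. -/
def GraphProduct.of (v : V) : G v →* GraphProduct Γ G :=
  (QuotientGroup.mk' (Subgroup.normalClosure (graphProductRels Γ G))).comp Monoid.CoprodI.of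

/-- The image `Ĝ_v` of a vertex group in the graph product. -/
def vertexSubgroup (v : V) : Subgroup (GraphProduct Γ G) :=
  (GraphProduct.of Γ G v).range

/-- The subgroup `⟨Λ⟩` generated by the vertex groups with vertices in `Λ`. -/
def spanSubgroup (Λ : Set V) : Subgroup (GraphProduct Γ G) :=
  ⨆ v ∈ Λ, vertexSubgroup Γ G v

/-- The star of a vertex: the vertex together with its neighbours. -/
def starSet (u : V) : Set V := insert u {w | Γ.Adj u w}

/-- `Λ` is a connected component of the subgraph of `Γ` induced on `S`: it is a nonempty
connected subset of `S` closed under adjacency within `S`. -/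
def IsConnCompOf (S Λ : Set V) : Prop :=
  Λ.Nonempty ∧ Λ ⊆ S ∧ (Γ.induce Λ).Connected ∧
    ∀ a ∈ Λ, ∀ b ∈ S, Γ.Adj a b → b ∈ Λ

/-- A local automorphism: permutes the vertex subgroups according to a graph automorphism. -/
def IsLocalAut (φ : MulAut (GraphProduct Γ G)) : Prop :=
  ∃ σ : Γ ≃g Γ, ∀ v : V,
    Subgroup.map φ.toMonoidHom (vertexSubgroup Γ G v) = vertexSubgroup Γ G (σ v)

/-- A partial conjugation: conjugates the vertex groups of a connected component `Λ` of the
graph induced on the complement of the star of `u` by an element `h ∈ Ĝ_u`, and fixes the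
other vertex groups pointwise. -/
def IsPartialConj (φ : MulAut (GraphProduct Γ G)) : Prop :=
  ∃ (u : V) (Λ : Set V) (h : GraphProduct Γ G),
    h ∈ vertexSubgroup Γ G u ∧
    IsConnCompOf Γ {w | w ∉ starSet Γ u} Λ ∧
    (∀ w ∈ Λ, ∀ x ∈ vertexSubgroup Γ G w, φ x = h * x * h⁻¹) ∧
    (∀ w, w ∉ Λ → ∀ x ∈ vertexSubgroup Γ G w, φ x = x)

/-- The subgroup of `Aut(Γ𝒢)` generated by local automorphisms and partial conjugations. -/
def ConjP : Subgroup (MulAut (GraphProduct Γ G)) :=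
  Subgroup.closure {φ | IsLocalAut Γ G φ ∨ IsPartialConj Γ G φ}

/-- A conjugating automorphism: sends each vertex subgroup to a conjugate of a vertex
subgroup. -/
def IsConjugating (φ : MulAut (GraphProduct Γ G)) : Prop :=
  ∀ v : V, ∃ (w : V) (g : GraphProduct Γ G),
    Subgroup.map φ.toMonoidHom (vertexSubgroup Γ G v) =
      Subgroup.map (MulAut.conj g).toMonoidHom (vertexSubgroup Γ G w)

end GraphProductDefs

section Extra

variable {V : Type} (Γ : SimpleGraph V) (G : V → Type) [∀ v, Group (G v)]

/-- The Cayley graph `X(Γ,𝒢)` of the graph product with respect to the union of the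
(nontrivial elements of the) vertex subgroups. -/
def cayley : SimpleGraph (GraphProduct Γ G) where
  Adj x y := x ≠ y ∧ ∃ v : V, x⁻¹ * y ∈ vertexSubgroup Γ G v
  symm := ⟨by
    rintro x y ⟨hxy, v, hv⟩
    exact ⟨hxy.symm, v, by simpa using (vertexSubgroup Γ G v).inv_mem hv⟩⟩
  loopless := ⟨fun x h => h.1 rfl⟩

/-- A molecular graph: finite, connected, minimal degree at least 2, girth at least 5. -/
def Molecular : Prop :=
  Γ.Connected ∧ (∀ v : V, 2 ≤ (Γ.neighborSet v).ncard) ∧ 5 ≤ Γ.girth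

/-- An atomic graph: molecular, and the subgraph induced on the complement of each star is
nonempty and connected. -/
def Atomic : Prop :=
  Molecular Γ ∧ ∀ u : V, {w | w ∉ starSet Γ u}.Nonempty ∧
    (Γ.induce {w | w ∉ starSet Γ u}).Connected

/-- The link of a set of vertices: the vertices adjacent to every vertex of the set. -/
def linkSet (Λ : Set V) : Set V := {w | ∀ a ∈ Λ, Γ.Adj w a}

/-- A subgroup decomposes non-trivially as a direct product. -/
def IsNontrivDirectProduct (H : Subgroup (GraphProduct Γ G)) : Prop :=
  ∃ (A B : Type) (_ : Group A) (_ : Group B),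
    Nontrivial A ∧ Nontrivial B ∧ Nonempty (H ≃* A × B)

/-- `Γ` has a SIL: two distinct non-adjacent vertices `u`, `v` such that the graph induced on
the complement of `link(u) ∩ link(v)` has a connected component containing neither `u` nor
`v`. -/
def HasSIL : Prop :=
  ∃ u v : V, u ≠ v ∧ ¬ Γ.Adj u v ∧
    ∃ Λ : Set V, IsConnCompOf Γ {w | ¬ (Γ.Adj u w ∧ Γ.Adj v w)} Λ ∧ u ∉ Λ ∧ v ∉ Λ

end Extra

/-!
Let `φ = conj g` be local, permuting the vertex groups along `σ`. Retracting `Γ𝒢` onto a single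
vertex group `Ĝ_v` kills every other vertex group, so `σ v = v`: otherwise a nontrivial element
of `Ĝ_v` would be conjugate to `1`. Hence `g` normalizes every `Ĝ_v`. Since `Γ` is not a star,
each `v` has a vertex `w` outside `star(v)`, and the retraction onto the free product
`G_v * G_w` maps `g` to an element normalizing both free factors. Normal forms in free products
show that an element conjugating a nontrivial element of a factor into that factor lies in it,
and distinct factors meet trivially, so this image is `1`. Therefore `g` centralizes `Ĝ_v` for
every `v`, i.e. `g` is central.
-/

namespace Monoid.CoprodI

variable {ι : Type*} {M : ι → Type*} [∀ i, Group (M i)]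

theorem NeWord.prod_ne_of {i j k : ι} (w : NeWord M i j) (hw : 2 ≤ w.toList.length) (m : M k) :
    w.prod ≠ of m := by
  classical
  intro h
  have hprod : Function.Injective (Word.prod : Word M → CoprodI M) := Word.equiv.symm.injective
  by_cases hm : m = 1
  · have hempty : w.toWord = Word.empty :=
      hprod (by rw [Word.prod_empty, ← NeWord.prod, h, hm, map_one])
    have hnil := congrArg Word.toList hempty
    exact w.toList_ne_nil hnil
  · have hsingle : w.toWord = (NeWord.singleton m hm).toWord :=
      hprod (by rw [← NeWord.prod, ← NeWord.prod, h, NeWord.prod_singleton])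
    have hlen := congrArg (fun u : Word M => u.toList.length) hsingle
    simp only [NeWord.toWord, NeWord.toList, List.length_singleton] at hlen
    omega

theorem NeWord.inv_prod_mul_of_mul_prod_ne_of {i j k : ι} (w : NeWord M i j) (hki : k ≠ i)
    {a : M k} (ha : a ≠ 1) (a' : M k) : w.prod⁻¹ * of a * w.prod ≠ of a' := by
  have hlen : 2 ≤ ((w.inv.append hki.symm (singleton a ha)).append hki w).toList.length := by
    have := List.length_pos_of_ne_nil w.toList_ne_nil
    simp only [toList, List.length_append, List.length_singleton]
    omega
  simpa only [append_prod, prod_singleton, inv_prod] using NeWord.prod_ne_of _ hlen a'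

theorem exists_eq_of_mul_word_prod (i : ι) (x : CoprodI M) :
    ∃ (c : M i) (t : Word M), t.fstIdx ≠ some i ∧ x = of c * t.prod := by
  classical
  let p := Word.equivPair i (Word.equiv x)
  refine ⟨p.head, p.tail, p.fstIdx_ne, ?_⟩
  rw [← Word.prod_rcons, ← Word.equivPair_symm]
  simp only [p, Equiv.symm_apply_apply]
  exact (Word.equiv.symm_apply_apply x).symm

theorem mem_range_of_of_conj_mem_range_of {i : ι} {x : CoprodI M} {a : M i} (ha : a ≠ 1)
    (h : x * of a * x⁻¹ ∈ (of : M i →* CoprodI M).range) :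
    x ∈ (of : M i →* CoprodI M).range := by
  classical
  obtain ⟨a', ha'⟩ := h
  obtain ⟨c, t, ht, hx⟩ := exists_eq_of_mul_word_prod i x⁻¹
  by_cases ht0 : t = Word.empty
  · rw [ht0, Word.prod_empty, mul_one, inv_eq_iff_eq_inv, ← map_inv] at hx
    exact ⟨c⁻¹, hx.symm⟩
  · obtain ⟨k, l, w, rfl⟩ := NeWord.of_word t ht0
    have hik : i ≠ k := Ne.symm (by simpa [Word.fstIdx, NeWord.toWord] using ht)
    -- the right-hand side is a reduced word of length at least 3, hence not a single letter
    have hconj : x * of a * x⁻¹ = w.prod⁻¹ * of (c⁻¹ * a * c) * w.prod := by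
      rw [← inv_inv x, hx, ← NeWord.prod]
      simp only [map_mul, map_inv, mul_inv_rev, inv_inv, mul_assoc]
    exact absurd (hconj ▸ ha'.symm) <|
      w.inv_prod_mul_of_mul_prod_ne_of hik (by simpa [mul_assoc, inv_mul_eq_one] using ha) a'

theorem eq_one_of_conj_mem_range_of_of_ne {i j : ι} (hij : i ≠ j) {x : CoprodI M}
    {a : M i} (ha : a ≠ 1) {b : M j} (hb : b ≠ 1)
    (hxa : x * of a * x⁻¹ ∈ (of : M i →* CoprodI M).range)
    (hxb : x * of b * x⁻¹ ∈ (of : M j →* CoprodI M).range) : x = 1 := by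
  classical
  obtain ⟨c, rfl⟩ := mem_range_of_of_conj_mem_range_of ha hxa
  obtain ⟨d, hd⟩ := mem_range_of_of_conj_mem_range_of hb hxb
  have hc : c = 1 := by
    simpa [Pi.mulSingle_eq_of_ne hij.symm] using
      congrArg (lift (Pi.mulSingle i (MonoidHom.id (M i)))) hd.symm
  rw [hc, map_one]

end Monoid.CoprodI

namespace GraphProduct

variable {V : Type} (Γ : SimpleGraph V) (G : V → Type) [∀ v, Group (G v)]

def lift {N : Type*} [Group N] (f : ∀ v, G v →* N)
    (hf : ∀ ⦃u v : V⦄, Γ.Adj u v → ∀ (x : G u) (y : G v), Commute (f u x) (f v y)) :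
    GraphProduct Γ G →* N :=
  QuotientGroup.lift _ (Monoid.CoprodI.lift f) <| Subgroup.normalClosure_le_normal <| by
    rintro _ ⟨u, v, x, y, huv, rfl⟩
    simp [(hf huv x y).eq]

@[simp]
theorem lift_of {N : Type*} [Group N] (f : ∀ v, G v →* N)
    (hf : ∀ ⦃u v : V⦄, Γ.Adj u v → ∀ (x : G u) (y : G v), Commute (f u x) (f v y))
    (v : V) (x : G v) : lift Γ G f hf (of Γ G v x) = f v x :=
  Monoid.CoprodI.lift_of f x

theorem hom_ext {N : Type*} [Monoid N] {f f' : GraphProduct Γ G →* N}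
    (h : ∀ v, f.comp (of Γ G v) = f'.comp (of Γ G v)) : f = f' :=
  QuotientGroup.monoidHom_ext _ (Monoid.CoprodI.ext_hom _ _ h)

open Classical in
noncomputable def retract (S : Set V) (hS : Γ.IsIndepSet S) :
    GraphProduct Γ G →* Monoid.CoprodI G :=
  lift Γ G (fun v => if v ∈ S then Monoid.CoprodI.of else 1) <| by
    intro u v huv x y
    by_cases hu : u ∈ S
    · have hv : v ∉ S := fun hv => hS hu hv huv.ne huv
      simp [hv]
    · simp [hu]

theorem retract_of_mem {S : Set V} (hS : Γ.IsIndepSet S) {v : V} (hv : v ∈ S) (x : G v) :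
    retract Γ G S hS (of Γ G v x) = Monoid.CoprodI.of x := by
  simp [retract, hv]

theorem retract_of_notMem {S : Set V} (hS : Γ.IsIndepSet S) {v : V} (hv : v ∉ S) (x : G v) :
    retract Γ G S hS (of Γ G v x) = 1 := by
  simp [retract, hv]

theorem retract_conj_mem_range_of {S : Set V} (hS : Γ.IsIndepSet S) {u : V} (hu : u ∈ S)
    {g : GraphProduct Γ G}
    (hg : (vertexSubgroup Γ G u).map (MulAut.conj g).toMonoidHom ≤ vertexSubgroup Γ G u)
    (y : G u) :
    retract Γ G S hS g * Monoid.CoprodI.of y * (retract Γ G S hS g)⁻¹ ∈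
      (Monoid.CoprodI.of : G u →* Monoid.CoprodI G).range := by
  obtain ⟨z, hz⟩ := hg (Subgroup.mem_map_of_mem _ ⟨y, rfl⟩)
  refine ⟨z, ?_⟩
  rw [← retract_of_mem Γ G hS hu, hz, ← retract_of_mem Γ G hS hu]
  simp

variable {Γ G}

theorem eq_of_map_conj_vertexSubgroup_le {v w : V} [Nontrivial (G v)] {g : GraphProduct Γ G}
    (hg : (vertexSubgroup Γ G v).map (MulAut.conj g).toMonoidHom ≤ vertexSubgroup Γ G w) :
    v = w := by
  by_contra hvw
  obtain ⟨x, hx⟩ := exists_ne (1 : G v)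
  obtain ⟨y, hy⟩ := hg (Subgroup.mem_map_of_mem _ ⟨x, rfl⟩)
  have hS : Γ.IsIndepSet {v} := Set.pairwise_singleton _ _
  have hr := congrArg (retract Γ G {v} hS) hy
  rw [retract_of_notMem Γ G hS (Ne.symm hvw)] at hr
  simp only [MulEquiv.coe_toMonoidHom, MulAut.conj_apply, map_mul, map_inv,
    retract_of_mem Γ G hS (Set.mem_singleton v)] at hr
  exact hx (Monoid.CoprodI.of_injective v ((conj_eq_one_iff.mp hr.symm).trans (map_one _).symm))

theorem conj_of_eq_of_map_conj_le {v w : V} (hw : w ∉ starSet Γ v)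
    [Nontrivial (G v)] [Nontrivial (G w)] {g : GraphProduct Γ G}
    (hgv : (vertexSubgroup Γ G v).map (MulAut.conj g).toMonoidHom ≤ vertexSubgroup Γ G v)
    (hgw : (vertexSubgroup Γ G w).map (MulAut.conj g).toMonoidHom ≤ vertexSubgroup Γ G w)
    (x : G v) : g * of Γ G v x * g⁻¹ = of Γ G v x := by
  obtain ⟨hwv, hvw⟩ : w ≠ v ∧ ¬ Γ.Adj v w := by simpa [starSet] using hw
  have hS : Γ.IsIndepSet {v, w} := Set.pairwise_pair.mpr fun _ => ⟨hvw, fun h => hvw h.symm⟩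
  obtain ⟨a, ha⟩ := exists_ne (1 : G v)
  obtain ⟨b, hb⟩ := exists_ne (1 : G w)
  have hrg : retract Γ G {v, w} hS g = 1 :=
    Monoid.CoprodI.eq_one_of_conj_mem_range_of_of_ne hwv.symm ha hb
      (retract_conj_mem_range_of Γ G hS (by simp) hgv a)
      (retract_conj_mem_range_of Γ G hS (by simp) hgw b)
  obtain ⟨x', hx'⟩ := hgv (Subgroup.mem_map_of_mem _ ⟨x, rfl⟩)
  have hr := congrArg (retract Γ G {v, w} hS) hx'
  simp only [MulEquiv.coe_toMonoidHom, MulAut.conj_apply, map_mul, map_inv,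
    retract_of_mem Γ G hS (Set.mem_insert v _), hrg, one_mul, inv_one, mul_one] at hr
  rw [← MulAut.conj_apply, ← MulEquiv.coe_toMonoidHom, ← hx',
    Monoid.CoprodI.of_injective v hr]

theorem conj_eq_one_of_conj_of_eq {g : GraphProduct Γ G}
    (hg : ∀ v (x : G v), g * of Γ G v x * g⁻¹ = of Γ G v x) : MulAut.conj g = 1 := by
  have hid : (MulAut.conj g).toMonoidHom = MonoidHom.id _ :=
    hom_ext Γ G fun v => MonoidHom.ext (hg v)
  ext x
  exact DFunLike.congr_fun hid x

end GraphProduct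

theorem inner_and_local_eq_id_general {V : Type} (Γ : SimpleGraph V)
    (G : V → Type) [∀ v, Group (G v)] [∀ v, Nontrivial (G v)]
    (hΓ : ¬ ∃ u : V, ∀ v : V, v ∈ starSet Γ u)
    (φ : MulAut (GraphProduct Γ G))
    (hinner : ∃ g : GraphProduct Γ G, φ = MulAut.conj g)
    (hlocal : IsLocalAut Γ G φ) :
    φ = 1 := by
  obtain ⟨g, rfl⟩ := hinner
  obtain ⟨σ, hσ⟩ := hlocal
  have hnormalizes : ∀ v, (vertexSubgroup Γ G v).map (MulAut.conj g).toMonoidHom =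
      vertexSubgroup Γ G v := fun v => by
    rw [hσ v, ← GraphProduct.eq_of_map_conj_vertexSubgroup_le (hσ v).le]
  refine GraphProduct.conj_eq_one_of_conj_of_eq fun v x => ?_
  obtain ⟨w, hw⟩ := not_forall.mp (not_exists.mp hΓ v)
  exact GraphProduct.conj_of_eq_of_map_conj_le hw (hnormalizes v).le (hnormalizes w).le x

/-- **Lemma.** If `Γ` is not the star of a vertex, an automorphism which is simultaneously
inner and local is the identity. -/
theorem inner_and_local_eq_id {V : Type} [Fintype V] (Γ : SimpleGraph V)
    (G : V → Type) [∀ v, Group (G v)] [∀ v, Nontrivial (G v)]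
    (hΓ : ¬ ∃ u : V, ∀ v : V, v ∈ starSet Γ u)
    (φ : MulAut (GraphProduct Γ G))
    (hinner : ∃ g : GraphProduct Γ G, φ = MulAut.conj g)
    (hlocal : IsLocalAut Γ G φ) :
    φ = 1 :=
  inner_and_local_eq_id_general Γ G hΓ φ hinner hlocal
end

section
/- Let Γ be a finite simplicial graph and 𝒢 = (G_v)_{v∈V} a family of nontrivial groups, and let X(Γ,𝒢) be the Cayley graph of Γ𝒢 with respect to the generating set ⋃_{v∈V} (Ĝ_v ∖ {1}). If x, y, z ∈ Γ𝒢 are pairwise adjacent in X(Γ,𝒢), then there exists a single vertex v ∈ V such that x⁻¹y, y⁻¹z and x⁻¹z all belong to Ĝ_v. -/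
open scoped Pointwise

namespace GraphProduct

variable {V : Type} {Γ : SimpleGraph V} {G : V → Type} [∀ v, Group (G v)]

/-- The direct product is the graph product over the complete graph, hence a quotient of any
graph product. -/
noncomputable def toPi [DecidableEq V] : GraphProduct Γ G →* ∀ v, G v :=
  QuotientGroup.lift _ (Monoid.CoprodI.lift (MonoidHom.mulSingle G)) <| by
    refine Subgroup.normalClosure_le_normal ?_
    rintro _ ⟨u, v, g, h, huv, rfl⟩
    simpa [commutatorElement_def] using (Pi.mulSingle_commute huv.ne g h).commutator_eq

@[simp]
lemma toPi_of [DecidableEq V] (v : V) (g : G v) : toPi (of Γ G v g) = Pi.mulSingle v g := by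
  simp [toPi, of]

lemma toPi_apply_of_mem_vertexSubgroup_ne [DecidableEq V] {a : GraphProduct Γ G} {v w : V}
    (ha : a ∈ vertexSubgroup Γ G w) (hvw : v ≠ w) : toPi a v = 1 := by
  obtain ⟨g, rfl⟩ := ha
  simp [Pi.mulSingle_eq_of_ne hvw]

lemma toPi_apply_ne_one_of_mem_vertexSubgroup [DecidableEq V] {a : GraphProduct Γ G} {v : V}
    (ha : a ∈ vertexSubgroup Γ G v) (ha1 : a ≠ 1) : toPi a v ≠ 1 := by
  obtain ⟨g, rfl⟩ := ha
  rintro hg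
  simp only [toPi_of, Pi.mulSingle_eq_same] at hg
  exact ha1 (by rw [hg, map_one])

/-- If `u ≠ v`, the image of `a * b` in the direct product has two nontrivial coordinates. -/
lemma eq_of_mul_mem_vertexSubgroup {a b : GraphProduct Γ G} {u v w : V}
    (ha : a ∈ vertexSubgroup Γ G u) (hb : b ∈ vertexSubgroup Γ G v)
    (hab : a * b ∈ vertexSubgroup Γ G w) (ha1 : a ≠ 1) (hb1 : b ≠ 1) : u = v := by
  classical
  by_contra huv
  have hwu : w = u := by
    by_contra hwu
    refine toPi_apply_ne_one_of_mem_vertexSubgroup ha ha1 ?_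
    have := toPi_apply_of_mem_vertexSubgroup_ne hab (Ne.symm hwu)
    rwa [map_mul, Pi.mul_apply, toPi_apply_of_mem_vertexSubgroup_ne hb huv, mul_one] at this
  subst hwu
  refine toPi_apply_ne_one_of_mem_vertexSubgroup hb hb1 ?_
  have := toPi_apply_of_mem_vertexSubgroup_ne hab (Ne.symm huv)
  rwa [map_mul, Pi.mul_apply, toPi_apply_of_mem_vertexSubgroup_ne ha (Ne.symm huv), one_mul] at this

end GraphProduct

theorem triangle_common_vertex_group_general {V : Type}
    (Γ : SimpleGraph V) (G : V → Type) [∀ v, Group (G v)]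
    (x y z : GraphProduct Γ G)
    (hxy : (cayley Γ G).Adj x y) (hyz : (cayley Γ G).Adj y z) (hxz : (cayley Γ G).Adj x z) :
    ∃ v : V, x⁻¹ * y ∈ vertexSubgroup Γ G v ∧ y⁻¹ * z ∈ vertexSubgroup Γ G v ∧
      x⁻¹ * z ∈ vertexSubgroup Γ G v := by
  obtain ⟨hxy, u, hu⟩ := hxy
  obtain ⟨hyz, v, hv⟩ := hyz
  obtain ⟨-, w, hw⟩ := hxz
  have hprod : (x⁻¹ * y) * (y⁻¹ * z) = x⁻¹ * z := by group
  obtain rfl : u = v := GraphProduct.eq_of_mul_mem_vertexSubgroup hu hv (hprod ▸ hw)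
    (mt inv_mul_eq_one.mp hxy) (mt inv_mul_eq_one.mp hyz)
  exact ⟨u, hu, hv, hprod ▸ mul_mem hu hv⟩

/-- **Fact.** The edges of a triangle in `X(Γ,𝒢)` are labelled by elements of a common
vertex group. -/
theorem triangle_common_vertex_group {V : Type} [Fintype V]
    (Γ : SimpleGraph V) (G : V → Type) [∀ v, Group (G v)] [∀ v, Nontrivial (G v)]
    (x y z : GraphProduct Γ G)
    (hxy : (cayley Γ G).Adj x y) (hyz : (cayley Γ G).Adj y z) (hxz : (cayley Γ G).Adj x z) :
    ∃ v : V, x⁻¹ * y ∈ vertexSubgroup Γ G v ∧ y⁻¹ * z ∈ vertexSubgroup Γ G v ∧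
      x⁻¹ * z ∈ vertexSubgroup Γ G v :=
  triangle_common_vertex_group_general Γ G x y z hxy hyz hxz
end

section
/- Let Γ be a finite simplicial graph and 𝒢 = (G_v)_{v∈V} a family of nontrivial groups, and let X(Γ,𝒢) be the Cayley graph of Γ𝒢 with respect to the generating set ⋃_{v∈V} (Ĝ_v ∖ {1}), with graph distance d. For every u ∈ V and every g ∈ Γ𝒢, there exists a unique h ∈ Ĝ_u such that d(g,h) ≤ d(g,k) for all k ∈ Ĝ_u. -/
open scoped Pointwise

/-!
Reduced words in the vertex groups, taken up to shuffling adjacent letters at adjacent vertices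
of `Γ`, carry an action of `Γ𝒢` (Green's normal form), and `d(x, y)` is the length of the reduced
word of `x⁻¹y`. Shuffle a letter `p ∈ G_u` to the front of the reduced word of `g`, leaving a
word `t` from which no further letter at `u` can be shuffled to the front. Multiplying by `c⁻¹`
for `c ∈ G_u` then gives the reduced word `(c⁻¹p) t`, where the first letter is dropped if
`c = p`; so `d(g, ĉ) = |t|` if `c = p` and `|t| + 1` otherwise, and `p` is the unique closest
point.
-/

namespace GraphProduct

variable {V : Type} {Γ : SimpleGraph V} {G : V → Type}

abbrev Word (G : V → Type) := List ((v : V) × G v)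

namespace Word

variable (Γ) in
inductive Swap : Word G → Word G → Prop
  | head (a b : (v : V) × G v) (t : Word G) : Γ.Adj a.1 b.1 → Swap (a :: b :: t) (b :: a :: t)
  | cons (a : (v : V) × G v) {t t' : Word G} : Swap t t' → Swap (a :: t) (a :: t')

theorem Swap.length_eq {w w' : Word G} (h : Swap Γ w w') : w.length = w'.length := by
  induction h <;> simp_all

variable (Γ) in
abbrev ShuffleEquiv : Word G → Word G → Prop := Relation.EqvGen (Swap Γ)

namespace ShuffleEquiv

theorem rel_of_swap_le {r : Word G → Word G → Prop} (hr : Equivalence r)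
    (hswap : Swap Γ ≤ r) {w w' : Word G} (h : ShuffleEquiv Γ w w') : r w w' :=
  hr.eqvGen_iff.1 (Relation.EqvGen.mono hswap _ _ h)

theorem cons (a : (v : V) × G v) {t t' : Word G} (h : ShuffleEquiv Γ t t') :
    ShuffleEquiv Γ (a :: t) (a :: t') :=
  h.rel_of_swap_le ((Relation.EqvGen.is_equivalence _).comap _)
    fun _ _ hs => .rel _ _ (.cons a hs)

theorem length_eq {w w' : Word G} (h : ShuffleEquiv Γ w w') : w.length = w'.length :=
  h.rel_of_swap_le (eq_equivalence.comap List.length) fun _ _ hs => hs.length_eq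

end ShuffleEquiv

end Word

variable [∀ v, Group (G v)]

theorem commute_of_adj {u v : V} (h : Γ.Adj u v) (g : G u) (k : G v) :
    Commute (of Γ G u g) (of Γ G v k) := by
  have hrel : Monoid.CoprodI.of g * Monoid.CoprodI.of k * (Monoid.CoprodI.of g)⁻¹ *
      (Monoid.CoprodI.of k)⁻¹ ∈ Subgroup.normalClosure (graphProductRels Γ G) :=
    Subgroup.subset_normalClosure ⟨u, v, g, k, h, rfl⟩
  rw [← QuotientGroup.eq_one_iff, QuotientGroup.mk_mul, QuotientGroup.mk_mul,
    QuotientGroup.mk_mul, QuotientGroup.mk_inv, QuotientGroup.mk_inv, ← commutatorElement_def,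
    commutatorElement_eq_one_iff_commute] at hrel
  exact hrel

namespace Word

open scoped Classical

variable (Γ) in
/-- `split Γ v w` removes from `w` the first letter at `v` that commutes past all letters before
it, and returns that letter's value with the rest of `w`; it returns `(1, w)` if there is none. -/
noncomputable def split (v : V) : Word G → G v × Word G
  | [] => (1, [])
  | l :: t =>
    if h : l.1 = v then (h ▸ l.2, t)
    else if Γ.Adj l.1 v then ((split v t).1, l :: (split v t).2) else (1, l :: t)

@[simp] theorem split_nil (v : V) : split Γ v ([] : Word G) = (1, []) := rfl

@[simp] theorem split_cons_self (v : V) (g : G v) (t : Word G) :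
    split Γ v (⟨v, g⟩ :: t) = (g, t) := by
  simp [split]

theorem split_cons_of_ne {v : V} {l : (v : V) × G v} (h : l.1 ≠ v) (t : Word G) :
    split Γ v (l :: t) =
      if Γ.Adj l.1 v then ((split Γ v t).1, l :: (split Γ v t).2) else (1, l :: t) := by
  rw [split, dif_neg h]

theorem split_cons_of_adj {v : V} {l : (v : V) × G v} (h : Γ.Adj l.1 v) (t : Word G) :
    split Γ v (l :: t) = ((split Γ v t).1, l :: (split Γ v t).2) := by
  rw [split_cons_of_ne h.ne, if_pos h]

theorem split_cons_of_not_adj {v : V} {l : (v : V) × G v} (h : l.1 ≠ v) (h' : ¬ Γ.Adj l.1 v)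
    (t : Word G) : split Γ v (l :: t) = (1, l :: t) := by
  rw [split_cons_of_ne h, if_neg h']

noncomputable def rcons (v : V) (g : G v) (w : Word G) : Word G :=
  if g = 1 then w else ⟨v, g⟩ :: w

@[simp] theorem rcons_one (v : V) (w : Word G) : rcons v (1 : G v) w = w := by
  simp [rcons]

theorem rcons_of_ne_one {v : V} {g : G v} (hg : g ≠ 1) (w : Word G) :
    rcons v g w = ⟨v, g⟩ :: w := by
  simp [rcons, hg]

theorem length_rcons (v : V) (g : G v) (w : Word G) :
    (rcons v g w).length = w.length + if g = 1 then 0 else 1 := by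
  by_cases hg : g = 1 <;> simp [rcons, hg]

theorem split_rcons_of_adj {u v : V} (h : Γ.Adj v u) (g : G v) (w : Word G) :
    split Γ u (rcons v g w) = ((split Γ u w).1, rcons v g (split Γ u w).2) := by
  by_cases hg : g = 1
  · simp [hg]
  · simp only [rcons_of_ne_one hg, split_cons_of_adj (l := ⟨v, g⟩) h]

theorem split_rcons_self {v : V} {w : Word G} (h : split Γ v w = (1, w)) (g : G v) :
    split Γ v (rcons v g w) = (g, w) := by
  by_cases hg : g = 1
  · simp [hg, h]
  · simp [rcons_of_ne_one hg]

namespace ShuffleEquiv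

theorem rcons (v : V) (g : G v) {t t' : Word G} (h : ShuffleEquiv Γ t t') :
    ShuffleEquiv Γ (rcons v g t) (rcons v g t') := by
  by_cases hg : g = 1
  · simpa [hg] using h
  · simpa [rcons_of_ne_one hg] using h.cons _

end ShuffleEquiv

theorem shuffleEquiv_cons_rcons {v : V} {l : (v : V) × G v} (h : Γ.Adj l.1 v) (g : G v)
    (t : Word G) : ShuffleEquiv Γ (l :: rcons v g t) (rcons v g (l :: t)) := by
  by_cases hg : g = 1
  · simpa [hg] using .refl _
  · rw [rcons_of_ne_one hg, rcons_of_ne_one hg]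
    exact .rel _ _ (.head _ _ _ h)

theorem Swap.split (v : V) {w w' : Word G} (h : Swap Γ w w') :
    (split Γ v w).1 = (split Γ v w').1 ∧ ShuffleEquiv Γ (split Γ v w).2 (split Γ v w').2 := by
  induction h with
  | head a b t hab =>
    obtain ⟨a, x⟩ := a
    obtain ⟨b, y⟩ := b
    by_cases ha : a = v
    · subst ha
      simpa [split_cons_of_adj (l := ⟨b, y⟩) hab.symm] using .refl _
    by_cases hb : b = v
    · subst hb
      simpa [split_cons_of_adj (l := ⟨a, x⟩) hab] using .refl _
    simp only [split_cons_of_ne (l := ⟨a, x⟩) ha, split_cons_of_ne (l := ⟨b, y⟩) hb]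
    split_ifs <;> exact ⟨rfl, .rel _ _ (.head _ _ _ hab)⟩
  | cons a hs ih =>
    obtain ⟨a, x⟩ := a
    by_cases ha : a = v
    · subst ha
      simpa using .rel _ _ hs
    simp only [split_cons_of_ne (l := ⟨a, x⟩) ha]
    split_ifs
    · exact ⟨ih.1, ih.2.cons _⟩
    · exact ⟨rfl, .rel _ _ (.cons _ hs)⟩

theorem ShuffleEquiv.split (v : V) {w w' : Word G} (h : ShuffleEquiv Γ w w') :
    (split Γ v w).1 = (split Γ v w').1 ∧ ShuffleEquiv Γ (split Γ v w).2 (split Γ v w').2 := by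
  refine h.rel_of_swap_le ⟨fun _ => ⟨rfl, .refl _⟩, fun h => ⟨h.1.symm, .symm _ _ h.2⟩,
    fun h h' => ⟨h.1.trans h'.1, .trans _ _ _ h.2 h'.2⟩⟩ fun _ _ hs => hs.split v

theorem split_split_of_adj {u v : V} (huv : Γ.Adj u v) (w : Word G) :
    split Γ v (split Γ u w).2 = ((split Γ v w).1, (split Γ u (split Γ v w).2).2) := by
  induction w with
  | nil => simp
  | cons l t ih =>
    obtain ⟨a, x⟩ := l
    by_cases hu : a = u
    · subst hu
      simp [split_cons_of_adj (l := ⟨a, x⟩) huv]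
    by_cases hv : a = v
    · subst hv
      simp [split_cons_of_adj (l := ⟨a, x⟩) huv.symm]
    by_cases hau : Γ.Adj a u <;> by_cases hav : Γ.Adj a v
    · simp [split_cons_of_adj (l := ⟨a, x⟩) hau, split_cons_of_adj (l := ⟨a, x⟩) hav, ih]
    · simp [split_cons_of_adj (l := ⟨a, x⟩) hau, split_cons_of_not_adj (l := ⟨a, x⟩) hv hav]
    · simp [split_cons_of_not_adj (l := ⟨a, x⟩) hu hau, split_cons_of_adj (l := ⟨a, x⟩) hav]
    · simp [split_cons_of_not_adj (l := ⟨a, x⟩) hu hau, split_cons_of_not_adj (l := ⟨a, x⟩) hv hav]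

variable (Γ) in
/-- No letter is trivial and no two letters at the same vertex can be shuffled next to each
other. -/
def Reduced : Word G → Prop
  | [] => True
  | l :: t => l.2 ≠ 1 ∧ (split Γ l.1 t).1 = 1 ∧ Reduced t

theorem reduced_nil : Reduced Γ ([] : Word G) := trivial

theorem Reduced.split_eq_of_fst_eq_one {v : V} {w : Word G} (hw : Reduced Γ w)
    (h : (split Γ v w).1 = 1) : split Γ v w = (1, w) := by
  induction w with
  | nil => rfl
  | cons l t ih =>
    obtain ⟨a, x⟩ := l
    by_cases ha : a = v
    · subst ha
      exact absurd (by simpa using h) hw.1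
    simp only [split_cons_of_ne (l := ⟨a, x⟩) ha] at h ⊢
    split_ifs at h ⊢ with hav
    · rw [ih hw.2.2 h]
    · rfl

theorem Reduced.split_spec {v : V} {w : Word G} (hw : Reduced Γ w) :
    Reduced Γ (split Γ v w).2 ∧ split Γ v (split Γ v w).2 = (1, (split Γ v w).2) ∧
      ShuffleEquiv Γ w (rcons v (split Γ v w).1 (split Γ v w).2) := by
  induction w with
  | nil => exact ⟨reduced_nil, rfl, by simpa using .refl _⟩
  | cons l t ih =>
    obtain ⟨hl, hlt, ht⟩ := hw
    obtain ⟨a, x⟩ := l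
    by_cases ha : a = v
    · subst ha
      simpa [rcons_of_ne_one hl, ht.split_eq_of_fst_eq_one hlt] using ⟨ht, .refl _⟩
    by_cases hav : Γ.Adj a v
    · obtain ⟨hs, hss, heqv⟩ := ih ht
      have hlt' : (Word.split Γ a (Word.split Γ v t).2).1 = 1 := by
        simpa [split_rcons_of_adj hav.symm, hlt] using ((heqv.split a).1).symm
      simp only [split_cons_of_adj (l := ⟨a, x⟩) hav]
      exact ⟨⟨hl, hlt', hs⟩, by rw [hss],
        (heqv.cons _).trans _ _ _ (shuffleEquiv_cons_rcons hav _ _)⟩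
    · simp only [split_cons_of_not_adj (l := ⟨a, x⟩) ha hav, rcons_one]
      exact ⟨⟨hl, hlt, ht⟩, trivial, .refl _⟩

theorem Reduced.rcons {v : V} {t : Word G} (ht : Reduced Γ t) (hv : Word.split Γ v t = (1, t))
    (g : G v) : Reduced Γ (rcons v g t) := by
  by_cases hg : g = 1
  · simpa [hg] using ht
  · rw [rcons_of_ne_one hg]
    exact ⟨hg, by simp [hv], ht⟩

variable (Γ) in
/-- The reduced word for `of Γ G v g * x`, computed from a reduced word `w` for `x`. -/
noncomputable def smul (v : V) (g : G v) (w : Word G) : Word G :=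
  rcons v (g * (split Γ v w).1) (split Γ v w).2

theorem Reduced.smul {w : Word G} (hw : Reduced Γ w) (v : V) (g : G v) :
    Reduced Γ (smul Γ v g w) :=
  hw.split_spec.1.rcons hw.split_spec.2.1 _

theorem ShuffleEquiv.smul (v : V) (g : G v) {w w' : Word G} (h : ShuffleEquiv Γ w w') :
    ShuffleEquiv Γ (smul Γ v g w) (smul Γ v g w') := by
  obtain ⟨h1, h2⟩ := h.split v
  rw [Word.smul, Word.smul, h1]
  exact h2.rcons _ _

theorem Reduced.shuffleEquiv_smul_one {w : Word G} (hw : Reduced Γ w) (v : V) :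
    ShuffleEquiv Γ (Word.smul Γ v 1 w) w := by
  simpa [Word.smul] using .symm _ _ hw.split_spec.2.2

theorem Reduced.smul_smul {w : Word G} (hw : Reduced Γ w) {v : V} (g g' : G v) :
    Word.smul Γ v g (Word.smul Γ v g' w) = Word.smul Γ v (g * g') w := by
  simp only [Word.smul, split_rcons_self hw.split_spec.2.1, mul_assoc]

theorem shuffleEquiv_smul_smul_of_adj {u v : V} (huv : Γ.Adj u v) (g : G u) (h : G v)
    (w : Word G) : ShuffleEquiv Γ (smul Γ u g (smul Γ v h w)) (smul Γ v h (smul Γ u g w)) := by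
  obtain ⟨r, hvu, huv'⟩ : ∃ r, split Γ v (split Γ u w).2 = ((split Γ v w).1, r) ∧
      split Γ u (split Γ v w).2 = ((split Γ u w).1, r) := by
    refine ⟨_, split_split_of_adj huv w, ?_⟩
    rw [split_split_of_adj huv.symm w, split_split_of_adj huv w]
  simp only [smul, split_rcons_of_adj huv, split_rcons_of_adj huv.symm, hvu, huv']
  by_cases hx : g * (split Γ u w).1 = 1
  · simpa [hx] using .refl _
  by_cases hy : h * (split Γ v w).1 = 1
  · simpa [hy] using .refl _
  simp only [rcons_of_ne_one hx, rcons_of_ne_one hy]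
  exact .rel _ _ (.head _ _ _ huv)

variable (Γ) in
noncomputable def prod (w : Word G) : GraphProduct Γ G :=
  (w.map fun l => of Γ G l.1 l.2).prod

@[simp] theorem prod_nil : prod Γ ([] : Word G) = 1 := rfl

@[simp] theorem prod_cons (l : (v : V) × G v) (t : Word G) :
    prod Γ (l :: t) = of Γ G l.1 l.2 * prod Γ t := by
  simp [prod]

@[simp] theorem prod_rcons (v : V) (g : G v) (t : Word G) :
    prod Γ (rcons v g t) = of Γ G v g * prod Γ t := by
  by_cases hg : g = 1 <;> simp [rcons, hg]

theorem Swap.prod_eq {w w' : Word G} (h : Swap Γ w w') : prod Γ w = prod Γ w' := by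
  induction h with
  | head a b t hab => simp only [prod_cons, ← mul_assoc, (commute_of_adj hab a.2 b.2).eq]
  | cons a _ ih => rw [prod_cons, prod_cons, ih]

theorem ShuffleEquiv.prod_eq {w w' : Word G} (h : ShuffleEquiv Γ w w') : prod Γ w = prod Γ w' :=
  h.rel_of_swap_le (eq_equivalence.comap (prod Γ)) fun _ _ hs => hs.prod_eq

theorem Reduced.prod_smul {w : Word G} (hw : Reduced Γ w) (v : V) (g : G v) :
    prod Γ (Word.smul Γ v g w) = of Γ G v g * prod Γ w := by
  rw [Word.smul, prod_rcons, hw.split_spec.2.2.prod_eq, prod_rcons, map_mul, mul_assoc]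

end Word

open Word

instance : Setoid {w : Word G // Reduced Γ w} :=
  (Relation.EqvGen.setoid (Swap Γ)).comap Subtype.val

variable (Γ G) in
abbrev NormalForm : Type := Quotient (α := {w : Word G // Reduced Γ w}) inferInstance

namespace NormalForm

variable (Γ) in
noncomputable def vertexEnd (v : V) : G v →* Function.End (NormalForm Γ G) where
  toFun g :=
    Quotient.map (fun w => ⟨Word.smul Γ v g w.1, w.2.smul v g⟩) fun _ _ h => ShuffleEquiv.smul v g h
  map_one' := funext <| Quotient.ind fun w => Quotient.sound (w.2.shuffleEquiv_smul_one v)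
  map_mul' g g' := funext <| Quotient.ind fun w =>
    congrArg (Quotient.mk _) (Subtype.ext (w.2.smul_smul g g').symm)

variable (Γ) in
noncomputable def vertexPerm (v : V) : G v →* Equiv.Perm (NormalForm Γ G) :=
  Equiv.Perm.equivUnitsEnd.symm.toMonoidHom.comp (vertexEnd Γ v).toHomUnits

theorem vertexPerm_apply_mk (v : V) (g : G v) (w : {w : Word G // Reduced Γ w}) :
    vertexPerm Γ v g ⟦w⟧ = ⟦⟨Word.smul Γ v g w.1, w.2.smul v g⟩⟧ := rfl

theorem commute_vertexPerm_of_adj {u v : V} (huv : Γ.Adj u v) (g : G u) (h : G v) :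
    Commute (vertexPerm Γ u g) (vertexPerm Γ v h) :=
  Equiv.ext <| Quotient.ind fun w => Quotient.sound <| shuffleEquiv_smul_smul_of_adj huv g h w.1

variable (Γ G) in
noncomputable def toPerm : GraphProduct Γ G →* Equiv.Perm (NormalForm Γ G) :=
  QuotientGroup.lift _ (Monoid.CoprodI.lift (vertexPerm Γ)) <|
    Subgroup.normalClosure_le_normal <| by
      rintro _ ⟨u, v, g, h, huv, rfl⟩
      rw [SetLike.mem_coe, MonoidHom.mem_ker, ← commutatorElement_def, map_commutatorElement,
        Monoid.CoprodI.lift_of, Monoid.CoprodI.lift_of, commutatorElement_eq_one_iff_commute]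
      exact commute_vertexPerm_of_adj huv g h

theorem toPerm_of (v : V) (g : G v) : toPerm Γ G (of Γ G v g) = vertexPerm Γ v g :=
  Monoid.CoprodI.lift_of _ _

noncomputable def prod : NormalForm Γ G → GraphProduct Γ G :=
  Quotient.lift (fun w => Word.prod Γ w.1) fun _ _ h => ShuffleEquiv.prod_eq h

def length : NormalForm Γ G → ℕ :=
  Quotient.lift (fun w => w.1.length) fun _ _ h => ShuffleEquiv.length_eq h

@[simp] theorem length_mk (w : {w : Word G // Reduced Γ w}) : length ⟦w⟧ = w.1.length := rfl

theorem prod_toPerm (x : GraphProduct Γ G) (q : NormalForm Γ G) :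
    (toPerm Γ G x q).prod = x * q.prod := by
  induction x using QuotientGroup.induction_on generalizing q with | H y => ?_
  induction y using Monoid.CoprodI.induction_on generalizing q with
  | one => simp
  | of v g =>
    induction q using Quotient.ind with | _ w => exact w.2.prod_smul v g
  | mul y y' ihy ihy' =>
    rw [QuotientGroup.mk_mul, map_mul, Equiv.Perm.mul_apply, ihy, ihy', mul_assoc]

theorem length_toPerm_of_le (v : V) (g : G v) (q : NormalForm Γ G) :
    (toPerm Γ G (of Γ G v g) q).length ≤ q.length + 1 := by
  induction q using Quotient.ind with | _ w => ?_
  rw [toPerm_of, vertexPerm_apply_mk]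
  have := (w.2.split_spec (v := v)).2.2.length_eq
  simp only [length_mk, Word.smul, length_rcons] at this ⊢
  split_ifs at this ⊢ <;> omega

end NormalForm

variable (Γ G) in
noncomputable def normalForm (x : GraphProduct Γ G) : NormalForm Γ G :=
  NormalForm.toPerm Γ G x ⟦⟨[], reduced_nil⟩⟧

theorem prod_normalForm (x : GraphProduct Γ G) : (normalForm Γ G x).prod = x := by
  rw [normalForm, NormalForm.prod_toPerm]
  exact mul_one x

theorem normalForm_mul (x y : GraphProduct Γ G) :
    normalForm Γ G (x * y) = NormalForm.toPerm Γ G x (normalForm Γ G y) := by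
  rw [normalForm, map_mul, Equiv.Perm.mul_apply, normalForm]

theorem exists_walk_mul_prod (x : GraphProduct Γ G) (w : Word G) :
    ∃ p : (cayley Γ G).Walk x (x * w.prod Γ), p.length ≤ w.length := by
  induction w generalizing x with
  | nil => exact ⟨.copy .nil rfl (mul_one x).symm, by simp⟩
  | cons l t ih =>
    obtain ⟨p, hp⟩ := ih (x * of Γ G l.1 l.2)
    rw [Word.prod_cons, ← mul_assoc]
    by_cases hl : x * of Γ G l.1 l.2 = x
    · exact ⟨p.copy hl rfl, by simp only [SimpleGraph.Walk.length_copy, List.length_cons]; omega⟩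
    · have hadj : (cayley Γ G).Adj x (x * of Γ G l.1 l.2) :=
        ⟨Ne.symm hl, l.1, by simp [vertexSubgroup]⟩
      exact ⟨.cons hadj p, by simp only [SimpleGraph.Walk.length_cons, List.length_cons]; omega⟩

theorem length_normalForm_le {x y : GraphProduct Γ G} (p : (cayley Γ G).Walk x y) :
    (normalForm Γ G (x⁻¹ * y)).length ≤ p.length := by
  induction p with
  | nil => simp [normalForm, NormalForm.length]
  | @cons a b c hadj p ih =>
    obtain ⟨v, g, hg⟩ := hadj.2
    have hsplit : a⁻¹ * c = of Γ G v g * (b⁻¹ * c) := by rw [hg]; group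
    rw [hsplit, normalForm_mul, NormalForm.toPerm_of, SimpleGraph.Walk.length_cons]
    exact (NormalForm.length_toPerm_of_le v g _).trans (by omega)

theorem dist_eq_length_normalForm (x y : GraphProduct Γ G) :
    (cayley Γ G).dist x y = (normalForm Γ G (x⁻¹ * y)).length := by
  induction hw : normalForm Γ G (x⁻¹ * y) using Quotient.ind with | _ w => ?_
  have hy : x * w.1.prod Γ = y := by
    rw [← mul_inv_cancel_left x y, ← prod_normalForm (x⁻¹ * y), hw]
    rfl
  obtain ⟨p, hp⟩ := exists_walk_mul_prod x w.1
  refine le_antisymm ((SimpleGraph.dist_le (p.copy rfl hy)).trans (by simpa using hp)) ?_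
  obtain ⟨q, hq⟩ :=
    SimpleGraph.Reachable.exists_walk_length_eq_dist (G := cayley Γ G) ⟨p.copy rfl hy⟩
  rw [← hw, ← hq]
  exact length_normalForm_le q

open scoped Classical in
theorem exists_dist_eq_add_ite (u : V) (g : GraphProduct Γ G) :
    ∃ (p : G u) (n : ℕ), ∀ c : G u,
      (cayley Γ G).dist g (of Γ G u c) = n + if c = p then 0 else 1 := by
  induction hw : normalForm Γ G g using Quotient.ind with | _ w => ?_
  refine ⟨(split Γ u w.1).1, (split Γ u w.1).2.length, fun c => ?_⟩
  rw [SimpleGraph.dist_comm, dist_eq_length_normalForm, ← map_inv, normalForm_mul, hw,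
    NormalForm.toPerm_of, NormalForm.vertexPerm_apply_mk]
  simp only [NormalForm.length_mk, Word.smul, length_rcons, inv_mul_eq_one]

end GraphProduct

theorem unique_projection_onto_clique_general {V : Type}
    (Γ : SimpleGraph V) (G : V → Type) [∀ v, Group (G v)]
    (u : V) (g : GraphProduct Γ G) :
    ∃! h : GraphProduct Γ G, h ∈ vertexSubgroup Γ G u ∧
      ∀ k ∈ vertexSubgroup Γ G u, (cayley Γ G).dist g h ≤ (cayley Γ G).dist g k := by
  obtain ⟨p, n, hdist⟩ := GraphProduct.exists_dist_eq_add_ite u g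
  refine ⟨GraphProduct.of Γ G u p, ⟨⟨p, rfl⟩, ?_⟩, ?_⟩
  · rintro _ ⟨c, rfl⟩
    rw [hdist, hdist, if_pos rfl]
    omega
  · rintro _ ⟨⟨c, rfl⟩, hmin⟩
    have := hmin _ ⟨p, rfl⟩
    rw [hdist, hdist, if_pos rfl] at this
    split_ifs at this with hc
    · rw [hc]
    · omega

/-- **Lemma.** Every element of the graph product has a unique closest point on each clique
`Ĝ_u` in the Cayley graph `X(Γ,𝒢)`. -/
theorem unique_projection_onto_clique {V : Type} [Fintype V]
    (Γ : SimpleGraph V) (G : V → Type) [∀ v, Group (G v)] [∀ v, Nontrivial (G v)]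
    (u : V) (g : GraphProduct Γ G) :
    ∃! h : GraphProduct Γ G, h ∈ vertexSubgroup Γ G u ∧
      ∀ k ∈ vertexSubgroup Γ G u, (cayley Γ G).dist g h ≤ (cayley Γ G).dist g k :=
  unique_projection_onto_clique_general Γ G u g
end
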